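/- arXiv:1404.4916 — 2 statements merged into one kernel-verified Lean document; each statement's English description precedes it below -/
import Mathlib

section
/- Let ℋ be a separable infinite-dimensional complex Hilbert space and let α be a *-algebra automorphism of the C*-algebra 𝒦(ℋ) of compact operators on ℋ. Then there exists a unitary operator U on ℋ such that α(A) = U A U* for all A ∈ 𝒦(ℋ). -/
/-!
Fix a unit vector `e`. Since `α` is a bijective *-homomorphism on compacts, the image `Q` of
the projection `rankOne e e` is a nonzero projection with `Q K Q` a multiple of `Q` for every
compact `K`, hence `Q = rankOne f f` for a unit vector `f`. The map `U x := α (rankOne x e) f`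
then preserves inner products, as `α (rankOne x e)⋆ * α (rankOne y e) = ⟪x, y⟫ • Q`, is onto
because `α` is, and intertwines: `α T ∘ U = U ∘ T`, because `T * rankOne x e = rankOne (T x) e`.
-/

open ContinuousLinearMap InnerProductSpace

namespace InnerProductSpace

variable {𝕜 E F : Type*} [RCLike 𝕜] [NormedAddCommGroup E] [NormedSpace 𝕜 E]
  [NormedAddCommGroup F] [InnerProductSpace 𝕜 F]

theorem isCompactOperator_rankOne (x : E) (y : F) : IsCompactOperator (rankOne 𝕜 x y) :=
  (isCompactOperator_of_locallyCompactSpace_dom (innerSL 𝕜 y)).continuous_comp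
    (toSpanSingleton 𝕜 x).continuous

theorem rankOne_mul_mul_rankOne (x y z w : F) (T : F →L[𝕜] F) :
    rankOne 𝕜 x y * T * rankOne 𝕜 z w = inner 𝕜 y (T z) • rankOne 𝕜 x w := by
  rw [mul_assoc, mul_def, mul_def, comp_rankOne, rankOne_comp_rankOne]

variable [CompleteSpace F]

theorem exists_eq_rankOne_self_of_isStarProjection {Q : F →L[𝕜] F} (hQ : IsStarProjection Q)
    (hQ0 : Q ≠ 0) (hmin : ∀ x y : F, ∃ c : 𝕜, Q * rankOne 𝕜 x y * Q = c • Q) :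
    ∃ f : F, ‖f‖ = 1 ∧ Q = rankOne 𝕜 f f := by
  obtain ⟨g, hg⟩ : ∃ g, Q g ≠ 0 := by
    by_contra! h
    exact hQ0 (ext h)
  set f := (‖Q g‖⁻¹ : 𝕜) • Q g
  have hf : ‖f‖ = 1 := norm_smul_inv_norm hg
  have hQf : Q f = f := by
    rw [map_smul, ← mul_apply_eq_comp, hQ.isIdempotentElem.eq]
  refine ⟨f, hf, ext fun x ↦ ?_⟩
  obtain ⟨c, hc⟩ := hmin x f
  have hQx : Q x = c • f := by
    simpa [hQf, hf, inner_self_eq_norm_sq_to_K] using congr($hc f)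
  have hc : c = inner 𝕜 f x := calc
    c = inner 𝕜 f (Q x) := by simp [hQx, inner_smul_right, inner_self_eq_norm_sq_to_K, hf]
    _ = inner 𝕜 (Q f) x := (hQ.isSelfAdjoint.isSymmetric f x).symm
    _ = inner 𝕜 f x := by rw [hQf]
  rw [hQx, hc, rankOne_apply]

end InnerProductSpace

section

variable {𝕜 E : Type*} [RCLike 𝕜] [NormedAddCommGroup E] [InnerProductSpace 𝕜 E]
  [CompleteSpace E]

structure IsStarAlgAutOnCompacts (α : (E →L[𝕜] E) → (E →L[𝕜] E)) : Prop where
  bijOn : Set.BijOn α {T | IsCompactOperator T} {T | IsCompactOperator T}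
  map_add : ∀ S T : E →L[𝕜] E, IsCompactOperator S → IsCompactOperator T →
    α (S + T) = α S + α T
  map_smul : ∀ (c : 𝕜) (T : E →L[𝕜] E), IsCompactOperator T → α (c • T) = c • α T
  map_mul : ∀ S T : E →L[𝕜] E, IsCompactOperator S → IsCompactOperator T →
    α (S * T) = α S * α T
  map_star : ∀ T : E →L[𝕜] E, IsCompactOperator T → α (star T) = star (α T)

namespace IsStarAlgAutOnCompacts

variable {α : (E →L[𝕜] E) → (E →L[𝕜] E)}

theorem map_zero (hα : IsStarAlgAutOnCompacts α) : α 0 = 0 := by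
  simpa using hα.map_smul 0 0 isCompactOperator_zero

theorem map_ne_zero (hα : IsStarAlgAutOnCompacts α) {T : E →L[𝕜] E} (hT : IsCompactOperator T)
    (hT0 : T ≠ 0) : α T ≠ 0 := by
  rw [← hα.map_zero]
  exact hα.bijOn.injOn.ne hT isCompactOperator_zero hT0

theorem isStarProjection_map_rankOne_self (hα : IsStarAlgAutOnCompacts α) {e : E}
    (he : ‖e‖ = 1) : IsStarProjection (α (rankOne 𝕜 e e)) := by
  have hP := isStarProjection_rankOne_self (𝕜 := 𝕜) he
  have hPc := isCompactOperator_rankOne (𝕜 := 𝕜) e e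
  exact ⟨by rw [IsIdempotentElem, ← hα.map_mul _ _ hPc hPc, hP.isIdempotentElem.eq],
    by rw [IsSelfAdjoint, ← hα.map_star _ hPc, hP.isSelfAdjoint.star_eq]⟩

theorem exists_map_rankOne_mul_mul_map_rankOne_eq_smul (hα : IsStarAlgAutOnCompacts α) (e : E)
    {K : E →L[𝕜] E} (hK : IsCompactOperator K) :
    ∃ c : 𝕜, α (rankOne 𝕜 e e) * K * α (rankOne 𝕜 e e) = c • α (rankOne 𝕜 e e) := by
  obtain ⟨K', hK', rfl⟩ := hα.bijOn.surjOn hK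
  have hPc := isCompactOperator_rankOne (𝕜 := 𝕜) e e
  refine ⟨inner 𝕜 e (K' e), ?_⟩
  rw [← hα.map_mul _ _ hPc hK', ← hα.map_mul _ _ (hPc.comp_clm K') hPc,
    rankOne_mul_mul_rankOne, hα.map_smul _ _ hPc]

theorem exists_map_rankOne_self_eq (hα : IsStarAlgAutOnCompacts α) {e : E} (he : ‖e‖ = 1) :
    ∃ f : E, ‖f‖ = 1 ∧ α (rankOne 𝕜 e e) = rankOne 𝕜 f f := by
  have he0 : e ≠ 0 := norm_ne_zero_iff.mp (he ▸ one_ne_zero)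
  exact exists_eq_rankOne_self_of_isStarProjection (hα.isStarProjection_map_rankOne_self he)
    (hα.map_ne_zero (isCompactOperator_rankOne e e) (rankOne_ne_zero he0 he0))
    fun x y ↦ hα.exists_map_rankOne_mul_mul_map_rankOne_eq_smul e (isCompactOperator_rankOne x y)

noncomputable def implementingMap (hα : IsStarAlgAutOnCompacts α) (e f : E) : E →ₗ[𝕜] E where
  toFun x := α (rankOne 𝕜 x e) f
  map_add' x y := by
    rw [_root_.map_add, add_apply, hα.map_add _ _ (isCompactOperator_rankOne x e)
      (isCompactOperator_rankOne y e), add_apply]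
  map_smul' c x := by
    rw [_root_.map_smul, smul_apply, hα.map_smul _ _ (isCompactOperator_rankOne x e), smul_apply,
      RingHom.id_apply]

theorem implementingMap_apply (hα : IsStarAlgAutOnCompacts α) (e f x : E) :
    hα.implementingMap e f x = α (rankOne 𝕜 x e) f := rfl

theorem map_apply_implementingMap (hα : IsStarAlgAutOnCompacts α) (e f : E)
    {T : E →L[𝕜] E} (hT : IsCompactOperator T) (x : E) :
    α T (hα.implementingMap e f x) = hα.implementingMap e f (T x) := by
  rw [implementingMap_apply, implementingMap_apply, ← mul_apply_eq_comp,
    ← hα.map_mul _ _ hT (isCompactOperator_rankOne x e), mul_def, comp_rankOne]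

theorem inner_implementingMap (hα : IsStarAlgAutOnCompacts α) {e f : E} (hf : ‖f‖ = 1)
    (hef : α (rankOne 𝕜 e e) = rankOne 𝕜 f f) (x y : E) :
    inner 𝕜 (hα.implementingMap e f x) (hα.implementingMap e f y) = inner 𝕜 x y := by
  have hx := isCompactOperator_rankOne (𝕜 := 𝕜) x e
  have hy := isCompactOperator_rankOne (𝕜 := 𝕜) y e
  have key : star (α (rankOne 𝕜 x e)) * α (rankOne 𝕜 y e) = inner 𝕜 x y • rankOne 𝕜 f f := by
    rw [← hα.map_star _ hx, star_eq_adjoint, adjoint_rankOne,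
      ← hα.map_mul _ _ (isCompactOperator_rankOne e x) hy, mul_def, rankOne_comp_rankOne,
      hα.map_smul _ _ (isCompactOperator_rankOne e e), hef]
  calc _ = inner 𝕜 f ((star (α (rankOne 𝕜 x e)) * α (rankOne 𝕜 y e)) f) := by
        rw [mul_apply_eq_comp, star_eq_adjoint, adjoint_inner_right]; rfl
    _ = inner 𝕜 x y := by simp [key, inner_smul_right, inner_self_eq_norm_sq_to_K, hf]

theorem implementingMap_surjective (hα : IsStarAlgAutOnCompacts α) {e f : E} (hf : ‖f‖ = 1)
    (hef : α (rankOne 𝕜 e e) = rankOne 𝕜 f f) : Function.Surjective (hα.implementingMap e f) := by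
  intro z
  obtain ⟨K, hK, hαK⟩ := hα.bijOn.surjOn (isCompactOperator_rankOne (𝕜 := 𝕜) z f)
  refine ⟨K e, ?_⟩
  rw [implementingMap_apply, ← comp_rankOne, ← mul_def,
    hα.map_mul _ _ hK (isCompactOperator_rankOne e e), hαK, hef]
  simp [inner_self_eq_norm_sq_to_K, hf]

theorem exists_linearIsometryEquiv_map_apply (hα : IsStarAlgAutOnCompacts α) :
    ∃ U : E ≃ₗᵢ[𝕜] E, ∀ T : E →L[𝕜] E, IsCompactOperator T → ∀ x, α T (U x) = U (T x) := by
  rcases subsingleton_or_nontrivial E with hE | hE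
  · exact ⟨.refl 𝕜 E, fun _ _ _ ↦ Subsingleton.elim _ _⟩
  obtain ⟨x, hx⟩ := exists_ne (0 : E)
  set e := (‖x‖⁻¹ : 𝕜) • x
  obtain ⟨f, hf, hef⟩ := hα.exists_map_rankOne_self_eq (norm_smul_inv_norm hx : ‖e‖ = 1)
  exact ⟨.ofSurjective
    ((hα.implementingMap e f).isometryOfInner (hα.inner_implementingMap hf hef))
    (hα.implementingMap_surjective hf hef), fun _ ↦ hα.map_apply_implementingMap e f⟩

end IsStarAlgAutOnCompacts

end

theorem compact_operator_automorphism_inner_general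
    {H : Type*} [NormedAddCommGroup H] [InnerProductSpace ℂ H] [CompleteSpace H]
    (α : (H →L[ℂ] H) → (H →L[ℂ] H))
    (hbij : Set.BijOn α {T : H →L[ℂ] H | IsCompactOperator (⇑T)}
      {T : H →L[ℂ] H | IsCompactOperator (⇑T)})
    (hadd : ∀ S T : H →L[ℂ] H, IsCompactOperator (⇑S) → IsCompactOperator (⇑T) →
      α (S + T) = α S + α T)
    (hsmul : ∀ (c : ℂ) (T : H →L[ℂ] H), IsCompactOperator (⇑T) → α (c • T) = c • α T)
    (hmul : ∀ S T : H →L[ℂ] H, IsCompactOperator (⇑S) → IsCompactOperator (⇑T) →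
      α (S * T) = α S * α T)
    (hstar : ∀ T : H →L[ℂ] H, IsCompactOperator (⇑T) → α (star T) = star (α T)) :
    ∃ U : H →L[ℂ] H, U ∈ unitary (H →L[ℂ] H) ∧
      ∀ T : H →L[ℂ] H, IsCompactOperator (⇑T) → α T = U * T * star U := by
  obtain ⟨U, hU⟩ := IsStarAlgAutOnCompacts.exists_linearIsometryEquiv_map_apply
    ⟨hbij, hadd, hsmul, hmul, hstar⟩
  refine ⟨U, (Unitary.linearIsometryEquiv.symm U).prop, fun T hT ↦ ext fun w ↦ ?_⟩
  simpa using hU T hT (U.symm w)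

/-- Every *-algebra automorphism of the algebra `𝒦(ℋ)` of compact operators on a
separable infinite-dimensional complex Hilbert space is spatially implemented by a
unitary: `α(A) = U A U*` for all compact `A`.  The automorphism is encoded as a map
`α : B(ℋ) → B(ℋ)` which restricts to a bijection of the set of compact operators and is
linear, multiplicative and star-preserving there. -/
theorem compact_operator_automorphism_inner
    {H : Type*} [NormedAddCommGroup H] [InnerProductSpace ℂ H] [CompleteSpace H]
    [TopologicalSpace.SeparableSpace H] (hinf : ¬ FiniteDimensional ℂ H)
    (α : (H →L[ℂ] H) → (H →L[ℂ] H))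
    (hbij : Set.BijOn α {T : H →L[ℂ] H | IsCompactOperator (⇑T)}
      {T : H →L[ℂ] H | IsCompactOperator (⇑T)})
    (hadd : ∀ S T : H →L[ℂ] H, IsCompactOperator (⇑S) → IsCompactOperator (⇑T) →
      α (S + T) = α S + α T)
    (hsmul : ∀ (c : ℂ) (T : H →L[ℂ] H), IsCompactOperator (⇑T) → α (c • T) = c • α T)
    (hmul : ∀ S T : H →L[ℂ] H, IsCompactOperator (⇑S) → IsCompactOperator (⇑T) →
      α (S * T) = α S * α T)
    (hstar : ∀ T : H →L[ℂ] H, IsCompactOperator (⇑T) → α (star T) = star (α T)) :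
    ∃ U : H →L[ℂ] H, U ∈ unitary (H →L[ℂ] H) ∧
      ∀ T : H →L[ℂ] H, IsCompactOperator (⇑T) → α T = U * T * star U :=
  compact_operator_automorphism_inner_general α hbij hadd hsmul hmul hstar
end

section
/- Let ℋ be a complex Hilbert space and U a unitary operator on ℋ, and suppose there exists an orthonormal family (ξ_k)_{k ∈ ℤ} in ℋ with U ξ_k = ξ_{k+1} for all k ∈ ℤ (i.e. U contains a bilateral shift). Then μ is not weakly linearly disjoint from (B(ℋ), Ad(U)): there exist a bounded operator T on ℋ with ‖T‖ ≤ 1 and a unit vector ξ ∈ ℋ such that the sequence (1/N) · ∑_{n=1}^{N} μ(n) · ⟨Uⁿ T U*ⁿ ξ, ξ⟩ does not converge to 0 as N → ∞. Explicitly, one may take T = ∑_{k ≥ 1} μ(k) P_{−k}, where P_j is the orthogonal projection onto ℂξ_j, and ξ = ξ₀; then (1/N) · ∑_{n=1}^{N} μ(n) · ⟨Uⁿ T U*ⁿ ξ₀, ξ₀⟩ = (1/N) · ∑_{n=1}^{N} μ(n)², which does not converge to 0. -/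
open Filter ArithmeticFunction

/-!
Since `U*ⁿ ξ₀ = ξ₋ₙ`, the `n`-th coefficient `⟪ξ₀, Uⁿ T U*ⁿ ξ₀⟫` is the diagonal entry
`⟪ξ₋ₙ, T ξ₋ₙ⟫`. Let `T` act on `ξ₋ₖ` as multiplication by `μ(k) ∈ {-1, 0, 1}`: it is the difference
of the projections onto the closed spans of `{ξ₋ₖ | μ(k) = 1}` and `{ξ₋ₖ | μ(k) = -1}`, which are
orthogonal, so `‖T‖ ≤ 1`. The `n`-th term of the average is then `μ(n)²`, and the averages are the
densities of squarefree numbers in `[1, N]`. These stay above `1/12`: at most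
`N ∑_{d ≥ 2} d⁻² ≤ 11N/12` integers of `[1, N]` are divisible by a square `d² > 1`.
-/

lemma IsStarProjection.norm_sub_le_one {A : Type*} [NonUnitalNormedRing A] [StarRing A]
    [CStarRing A] {p q : A} (hp : IsStarProjection p) (hq : IsStarProjection q) (hpq : p * q = 0) :
    ‖p - q‖ ≤ 1 := by
  have hqp : q * p = 0 := by
    simpa [hp.isSelfAdjoint.star_eq, hq.isSelfAdjoint.star_eq] using congr(star $hpq)
  have hsq : star (p - q) * (p - q) = p + q := by
    rw [star_sub, hp.isSelfAdjoint.star_eq, hq.isSelfAdjoint.star_eq, sub_mul, mul_sub, mul_sub,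
      hpq, hqp, hp.isIdempotentElem.eq, hq.isIdempotentElem.eq]
    abel
  have := (hp.add hq hpq).norm_le
  rw [← hsq, CStarRing.norm_star_mul_self] at this
  nlinarith [norm_nonneg (p - q)]

lemma ContinuousLinearMap.pow_apply_of_apply_eq_add_one {R M : Type*} [Semiring R]
    [AddCommMonoid M] [TopologicalSpace M] [Module R M] {u : M →L[R] M} {ξ : ℤ → M}
    (hu : ∀ k, u (ξ k) = ξ (k + 1)) (n : ℕ) (m : ℤ) : (u ^ n) (ξ m) = ξ (m + n) := by
  induction n generalizing m with
  | zero => simp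
  | succ n ih => rw [pow_succ', mul_apply_eq_comp, ih, hu, Nat.cast_succ, add_assoc]

section InnerProductSpace

open Submodule

variable {𝕜 E ι : Type*} [RCLike 𝕜] [NormedAddCommGroup E] [InnerProductSpace 𝕜 E]

lemma Submodule.IsOrtho.topologicalClosure {U V : Submodule 𝕜 E} (h : U ⟂ V) :
    U.topologicalClosure ⟂ V.topologicalClosure := by
  rw [isOrtho_iff_le, orthogonal_closure]
  exact topologicalClosure_minimal _ h.le (isClosed_orthogonal _)

lemma Orthonormal.isOrtho_span_image {v : ι → E} (hv : Orthonormal 𝕜 v) {s t : Set ι}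
    (hst : Disjoint s t) : span 𝕜 (v '' s) ⟂ span 𝕜 (v '' t) := by
  rw [isOrtho_span]
  rintro _ ⟨i, hi, rfl⟩ _ ⟨j, hj, rfl⟩
  exact hv.inner_eq_zero (hst.ne_of_mem hi hj)

variable [CompleteSpace E]

lemma Orthonormal.starProjection_closure_span_image_apply {v : ι → E} (hv : Orthonormal 𝕜 v)
    (s : Set ι) (i : ι) :
    (span 𝕜 (v '' s)).topologicalClosure.starProjection (v i) = s.indicator v i := by
  by_cases hi : i ∈ s
  · rw [Set.indicator_of_mem hi, starProjection_eq_self_iff]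
    exact le_topologicalClosure _ (subset_span ⟨i, hi, rfl⟩)
  · rw [Set.indicator_of_notMem hi, starProjection_apply_eq_zero_iff, orthogonal_closure]
    exact hv.isOrtho_span_image (Set.disjoint_singleton_left.2 hi) (subset_span ⟨i, rfl, rfl⟩)

variable (𝕜) in
/-- For orthonormal `v`, the operator multiplying `v i` by the sign `σ i` and vanishing on the
orthogonal complement of all the `v i`. -/
noncomputable def signDiagonal (v : ι → E) (σ : ι → SignType) : E →L[𝕜] E :=
  (span 𝕜 (v '' (σ ⁻¹' {1}))).topologicalClosure.starProjection -
    (span 𝕜 (v '' (σ ⁻¹' {-1}))).topologicalClosure.starProjection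

variable {v : ι → E}

lemma Orthonormal.signDiagonal_apply (hv : Orthonormal 𝕜 v) (σ : ι → SignType) (i : ι) :
    signDiagonal 𝕜 v σ (v i) = (σ i : 𝕜) • v i := by
  rw [signDiagonal, sub_apply, hv.starProjection_closure_span_image_apply,
    hv.starProjection_closure_span_image_apply]
  rcases h : σ i with _ | _ | _ <;> simp [h]

lemma Orthonormal.norm_signDiagonal_le (hv : Orthonormal 𝕜 v) (σ : ι → SignType) :
    ‖signDiagonal 𝕜 v σ‖ ≤ 1 := by
  have hortho := (hv.isOrtho_span_image <|
    (Set.disjoint_singleton.2 (by decide : (1 : SignType) ≠ -1)).preimage σ).topologicalClosure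
  exact isStarProjection_starProjection.norm_sub_le_one isStarProjection_starProjection
    hortho.starProjection_comp_starProjection

lemma ContinuousLinearMap.inner_conj_map_map_of_mem_unitary {u : E →L[𝕜] E}
    (hu : u ∈ unitary (E →L[𝕜] E)) (T : E →L[𝕜] E) (x y : E) :
    inner 𝕜 (u x) ((u * T * star u) (u y)) = inner 𝕜 x (T y) := by
  have hy : star u (u y) = y := by
    rw [← mul_apply_eq_comp, Unitary.star_mul_self_of_mem hu, one_apply_eq_self]
  rw [mul_apply_eq_comp, mul_apply_eq_comp, hy, inner_map_map_of_mem_unitary hu]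

end InnerProductSpace

section Squarefree

open Finset

lemma sum_Ioo_one_inv_sq_le (n : ℕ) : ∑ i ∈ Ioo 1 n, ((i : ℝ) ^ 2)⁻¹ ≤ 11 / 12 := by
  have hsub : Ioo 1 n ⊆ insert 2 (Ioo 2 n) := by
    intro i
    simp only [mem_Ioo, mem_insert]
    omega
  calc ∑ i ∈ Ioo 1 n, ((i : ℝ) ^ 2)⁻¹ ≤ ∑ i ∈ insert 2 (Ioo 2 n), ((i : ℝ) ^ 2)⁻¹ :=
        sum_le_sum_of_subset_of_nonneg hsub fun _ _ _ => by positivity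
    _ = 1 / 4 + ∑ i ∈ Ioo 2 n, ((i : ℝ) ^ 2)⁻¹ := by rw [sum_insert (by simp)]; norm_num
    _ ≤ 1 / 4 + 2 / (2 + 1) := by gcongr; exact_mod_cast sum_Ioo_inv_sq_le 2 n
    _ = 11 / 12 := by norm_num

lemma card_filter_not_squarefree_le (N : ℕ) :
    #{n ∈ Ioc 0 N | ¬ Squarefree n} ≤ ∑ d ∈ Ioo 1 (N + 1), N / d ^ 2 := by
  calc #{n ∈ Ioc 0 N | ¬ Squarefree n}
      ≤ #((Ioo 1 (N + 1)).biUnion fun d => {n ∈ Ioc 0 N | d ^ 2 ∣ n}) := by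
        refine card_le_card fun n hn => ?_
        obtain ⟨hn, hsq⟩ := mem_filter.1 hn
        obtain ⟨p, hp, hpn⟩ : ∃ p, p.Prime ∧ p * p ∣ n := by
          simpa [Nat.squarefree_iff_prime_squarefree] using hsq
        have hpN : p ≤ N :=
          (Nat.le_mul_self p).trans ((Nat.le_of_dvd (mem_Ioc.1 hn).1 hpn).trans (mem_Ioc.1 hn).2)
        exact mem_biUnion.2 ⟨p, mem_Ioo.2 ⟨hp.one_lt, by omega⟩, mem_filter.2 ⟨hn, by rwa [sq]⟩⟩
    _ ≤ ∑ d ∈ Ioo 1 (N + 1), #{n ∈ Ioc 0 N | d ^ 2 ∣ n} := card_biUnion_le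
    _ = ∑ d ∈ Ioo 1 (N + 1), N / d ^ 2 := by simp only [Nat.Ioc_filter_dvd_card_eq_div]

lemma card_filter_squarefree_Icc_ge (N : ℕ) : (N : ℝ) / 12 ≤ #{n ∈ Icc 1 N | Squarefree n} := by
  have htotal : (#{n ∈ Ioc 0 N | Squarefree n} : ℝ) + #{n ∈ Ioc 0 N | ¬ Squarefree n} = N := by
    rw [← Nat.cast_add, card_filter_add_card_filter_not, Nat.card_Ioc, Nat.sub_zero]
  have hbad : (#{n ∈ Ioc 0 N | ¬ Squarefree n} : ℝ) ≤ N * (11 / 12) := calc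
    _ ≤ ∑ d ∈ Ioo 1 (N + 1), ((N / d ^ 2 : ℕ) : ℝ) := by
      exact_mod_cast card_filter_not_squarefree_le N
    _ ≤ ∑ d ∈ Ioo 1 (N + 1), (N : ℝ) * ((d : ℝ) ^ 2)⁻¹ := by
      gcongr with d
      exact Nat.cast_div_le.trans_eq (by push_cast; ring)
    _ ≤ N * (11 / 12) := by rw [← mul_sum]; gcongr; exact sum_Ioo_one_inv_sq_le _
  rw [show Icc 1 N = Ioc 0 N from Icc_add_one_left_eq_Ioc 0 N]
  linarith

lemma sum_moebius_sq_eq_card_filter_squarefree {R : Type*} [Ring R] (s : Finset ℕ) :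
    ∑ n ∈ s, (moebius n : R) ^ 2 = #{n ∈ s | Squarefree n} := by
  simp_rw [← Int.cast_pow, moebius_sq, apply_ite (Int.cast : ℤ → R), Int.cast_one, Int.cast_zero,
    sum_boole]

lemma not_tendsto_avg_moebius_sq_zero :
    ¬ Tendsto (fun N : ℕ => (N : ℂ)⁻¹ * ∑ n ∈ Icc 1 N, (moebius n : ℂ) ^ 2) atTop (nhds 0) := by
  intro h
  have hbound :
      ∀ᶠ N : ℕ in atTop, 1 / 12 ≤ ‖(N : ℂ)⁻¹ * ∑ n ∈ Icc 1 N, (moebius n : ℂ) ^ 2‖ := by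
    filter_upwards [eventually_gt_atTop 0] with N hN
    rw [sum_moebius_sq_eq_card_filter_squarefree, norm_mul, norm_inv, Complex.norm_natCast,
      Complex.norm_natCast, inv_mul_eq_div, le_div_iff₀ (by positivity)]
    linarith [card_filter_squarefree_Icc_ge N]
  have := ge_of_tendsto h.norm hbound
  norm_num at this

end Squarefree

/-- If a unitary `U` on a complex Hilbert space contains a bilateral shift (there is an
orthonormal family `(ξ_k)_{k ∈ ℤ}` with `U ξ_k = ξ_{k+1}`), then `μ` is NOT weakly
linearly disjoint from `(B(ℋ), Ad U)`: there is a contraction `T` (namely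
`T = ∑_{k ≥ 1} μ(k) P_{-k}`) such that `μ(n) ⟨Uⁿ T U*ⁿ ξ₀, ξ₀⟩ = μ(n)²` for all `n ≥ 1`,
and the averages `(1/N) ∑_{n=1}^N μ(n) ⟨Uⁿ T U*ⁿ ξ₀, ξ₀⟩ = (1/N) ∑_{n=1}^N μ(n)²` do not
converge to `0`.  (Mathlib's inner product is conjugate-linear in the first variable, so
`⟨S x, x⟩` is written `⟪x, S x⟫`.) -/
theorem moebius_not_weakly_disjoint_of_bilateral_shift
    {H : Type*} [NormedAddCommGroup H] [InnerProductSpace ℂ H] [CompleteSpace H]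
    (ξ : ℤ → H) (hortho : Orthonormal ℂ ξ)
    (U : H →L[ℂ] H) (hU : U ∈ unitary (H →L[ℂ] H))
    (hshift : ∀ k : ℤ, U (ξ k) = ξ (k + 1)) :
    ∃ T : H →L[ℂ] H, ‖T‖ ≤ 1 ∧
      (∀ n : ℕ, 1 ≤ n →
        (moebius n : ℂ) * (inner ℂ (ξ 0) ((U ^ n * T * star (U ^ n)) (ξ 0)) : ℂ)
          = (moebius n : ℂ) ^ 2) ∧
      ¬ Tendsto (fun N : ℕ => (N : ℂ)⁻¹ * ∑ n ∈ Finset.Icc 1 N,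
          (moebius n : ℂ) * (inner ℂ (ξ 0) ((U ^ n * T * star (U ^ n)) (ξ 0)) : ℂ))
        atTop (nhds 0) := by
  let σ : ℤ → SignType := fun m => SignType.sign (moebius (-m).toNat)
  have hσ (n : ℕ) : (σ (-n) : ℂ) = moebius n := by
    rcases moebius_eq_or n with h | h | h <;> simp [σ, h]
  have hdiag (n : ℕ) :
      inner ℂ (ξ 0) ((U ^ n * signDiagonal ℂ ξ σ * star (U ^ n)) (ξ 0)) = moebius n := by
    have hξ : ξ 0 = (U ^ n) (ξ (-n)) := by
      rw [U.pow_apply_of_apply_eq_add_one hshift, neg_add_cancel]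
    rw [hξ, ContinuousLinearMap.inner_conj_map_map_of_mem_unitary (pow_mem hU n),
      hortho.signDiagonal_apply, inner_smul_right,
      inner_self_eq_one_of_norm_eq_one (hortho.norm_eq_one _), mul_one, hσ]
  refine ⟨signDiagonal ℂ ξ σ, hortho.norm_signDiagonal_le σ, fun n _ => by rw [hdiag, sq], ?_⟩
  simpa only [hdiag, ← sq] using not_tendsto_avg_moebius_sq_zero
end
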